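/- Let G be a connected graph on m ≥ 2 vertices, and H a κ-regular graph on n vertices. Suppose QEC(G) > 0 and γ₃ := −2 − min ev(A_H) ≤ 0, and that −2 − ψ_H⁻¹(QEC(G)) ∉ ev(A_H). Then QEC(G⊙H) = ½[ (n+1)QEC(G) − (κ+2) + √( ((n+1)QEC(G) − (κ+2))² + 4(κ+2)QEC(G) ) ]. -/

import Mathlib

open Matrix BigOperators

/-- The join `K₁ + H` of a single vertex (labelled `none`) with `H`. -/
def joinOne {V₂ : Type*} (H : SimpleGraph V₂) : SimpleGraph (Option V₂) where
  Adj i j := (∃ a b, i = some a ∧ j = some b ∧ H.Adj a b) ∨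
    (i = none ∧ j ≠ none) ∨ (i ≠ none ∧ j = none)
  symm := by
    constructor
    rintro i j (⟨a, b, ha, hb, hab⟩ | ⟨h1, h2⟩ | ⟨h1, h2⟩)
    · exact Or.inl ⟨b, a, hb, ha, hab.symm⟩
    · exact Or.inr (Or.inr ⟨h2, h1⟩)
    · exact Or.inr (Or.inl ⟨h2, h1⟩)
  loopless := by
    constructor
    rintro i (⟨a, b, ha, hb, hab⟩ | ⟨h1, h2⟩ | ⟨h1, h2⟩)
    · rw [ha] at hb; injection hb with h; subst h; exact H.irrefl hab
    · exact h2 h1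
    · exact h1 h2

/-- The corona graph `G ⊙ H`, on vertex set `V₁ × ({o} ∪ V₂)` with `o = none`. -/
def corona {V₁ V₂ : Type*} (G : SimpleGraph V₁) (H : SimpleGraph V₂) :
    SimpleGraph (V₁ × Option V₂) where
  Adj p q := (p.2 = none ∧ q.2 = none ∧ G.Adj p.1 q.1) ∨
    (p.1 = q.1 ∧ (joinOne H).Adj p.2 q.2)
  symm := by
    constructor
    rintro p q (⟨h1, h2, h3⟩ | ⟨h1, h2⟩)
    · exact Or.inl ⟨h2, h1, h3.symm⟩
    · exact Or.inr ⟨h1.symm, (joinOne H).adj_symm h2⟩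
  loopless := by
    constructor
    rintro p (⟨_, _, h⟩ | ⟨_, h⟩)
    · exact G.irrefl h
    · exact (joinOne H).irrefl h

/-- The distance matrix of a graph, with real entries. -/
noncomputable def distMatrix {V : Type*} (G : SimpleGraph V) : Matrix V V ℝ :=
  fun x y => (G.dist x y : ℝ)

/-- The quadratic embedding constant of a graph:
`QEC(G) = max {⟨f, D f⟩ : ⟨f,f⟩ = 1, ⟨1,f⟩ = 0}`. -/
noncomputable def QEC {V : Type*} [Fintype V] (G : SimpleGraph V) : ℝ :=
  sSup {r : ℝ | ∃ f : V → ℝ, (∑ x, f x * f x) = 1 ∧ (∑ x, f x) = 0 ∧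
    r = f ⬝ᵥ (distMatrix G).mulVec f}


/-!
For `u ≠ v` the distance in `G ⊙ H` from `(u, x)` to `(v, y)` is `d_G(u, v) + [x ≠ o] + [y ≠ o]`,
and for `u = v` it is the distance in `K₁ + H`. Hence, for `f ⊥ 1`, the distance form of `G ⊙ H`
splits as `⟨β, D_G β⟩ - ∑ᵤ ⟨Fᵤ, (A_H + 2) Fᵤ⟩`, where `β u` sums `f` over the `u`-th copy and `Fᵤ`
is `f` on the copy of `H` at `u`. Since `min ev(A_H) ≥ -2`, `A_H + 2` is positive semidefinite.
Bounding `⟨β, D_G β⟩ ≤ QEC(G) ‖β‖²` and then each copy separately (split off the mean of `Fᵤ` and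
apply a weighted Cauchy–Schwarz inequality whose constant is `QEC(G)` exactly when
`ψ_H(λ) = QEC(G)`) gives `QEC(G ⊙ H) ≤ λ = ψ_H⁻¹(QEC(G))`. The equality case of that inequality,
tensored with a maximiser for `QEC(G)`, attains `λ`.
-/

open scoped Kronecker

namespace SimpleGraph

variable {V : Type*} {G : SimpleGraph V}

lemma Walk.le_length_of_le_succ_of_adj (T : V → V → ℕ) (hT : ∀ v, T v v = 0)
    (hadj : ∀ {u v w}, G.Adj u v → T u w ≤ T v w + 1) :
    ∀ {u w : V} (W : G.Walk u w), T u w ≤ W.length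
  | _, _, .nil => by simp [hT]
  | _, _, .cons h W => by
    rw [Walk.length_cons]
    exact (hadj h).trans (Nat.add_le_add_right (W.le_length_of_le_succ_of_adj T hT hadj) 1)

lemma Reachable.le_dist_of_le_succ_of_adj (T : V → V → ℕ) (hT : ∀ v, T v v = 0)
    (hadj : ∀ {u v w}, G.Adj u v → T u w ≤ T v w + 1) {u w : V} (h : G.Reachable u w) :
    T u w ≤ G.dist u w := by
  obtain ⟨W, hW⟩ := h.exists_walk_length_eq_dist
  exact hW ▸ W.le_length_of_le_succ_of_adj T hT hadj

end SimpleGraph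

section Psi

/-- `ψ_H⁻¹(q)` for a `κ`-regular `H` on `n` vertices, with `k = κ + 2`: the positive root of
`λ (λ + k) = q (λ (n + 1) + k)`, which is `ψ_H(λ) = q` with the denominator cleared. -/
noncomputable def psiInv (n k q : ℝ) : ℝ :=
  (1 / 2) * ((n + 1) * q - k + √(((n + 1) * q - k) ^ 2 + 4 * k * q))

variable {n k q : ℝ}

lemma psiInv_pos (hk : 0 < k) (hq : 0 < q) : 0 < psiInv n k q := by
  have h : |(n + 1) * q - k| < √(((n + 1) * q - k) ^ 2 + 4 * k * q) := by
    rw [← Real.sqrt_sq_eq_abs]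
    exact Real.sqrt_lt_sqrt (sq_nonneg _) (by nlinarith)
  unfold psiInv
  linarith [neg_abs_le ((n + 1) * q - k)]

lemma psiInv_mul_add (hk : 0 ≤ k) (hq : 0 ≤ q) :
    psiInv n k q * (psiInv n k q + k) = q * (psiInv n k q * (n + 1) + k) := by
  have hs := Real.sq_sqrt (by positivity : 0 ≤ ((n + 1) * q - k) ^ 2 + 4 * k * q)
  unfold psiInv
  linear_combination (1 / 4) * hs

/-- The weighted Cauchy–Schwarz inequality `(α + s)² ≤ (λ α² + ((λ + k) / n) s²) (1/λ + n/(λ + k))`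
with `s = n c`; the second factor is `1 / q` exactly when `ψ(λ) = q`. -/
lemma sq_add_le_of_mul_add {L : ℝ} (hn : 0 ≤ n) (hk : 0 ≤ k) (hL : 0 < L)
    (hψ : L * (L + k) = q * (L * (n + 1) + k)) (α c : ℝ) :
    q * (α + n * c) ^ 2 ≤ L * α ^ 2 + (L + k) * (n * c ^ 2) := by
  have hD : 0 < L * (n + 1) + k := by positivity
  have key : (L * (n + 1) + k) * (L * α ^ 2 + (L + k) * (n * c ^ 2) - q * (α + n * c) ^ 2) =
      n * (L * α - (L + k) * c) ^ 2 := by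
    linear_combination (α + n * c) ^ 2 * hψ
  have h0 : 0 ≤ L * α ^ 2 + (L + k) * (n * c ^ 2) - q * (α + n * c) ^ 2 :=
    (mul_nonneg_iff_of_pos_left hD).1 (by rw [key]; positivity)
  linarith

end Psi

section QuadraticForms

variable {m n : Type*} [Fintype m] [Fintype n]

lemma dotProduct_kronecker_mulVec (P : Matrix m m ℝ) (Q : Matrix n n ℝ) (f : m × n → ℝ) :
    f ⬝ᵥ (P ⊗ₖ Q) *ᵥ f = ∑ i, ∑ j, P i j * (Function.curry f i ⬝ᵥ Q *ᵥ Function.curry f j) := by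
  simp only [dotProduct, mulVec, Fintype.sum_prod_type, kroneckerMap_apply, Finset.mul_sum,
    Function.curry]
  refine Finset.sum_congr rfl fun i _ => ?_
  rw [Finset.sum_comm]
  exact Finset.sum_congr rfl fun j _ => Finset.sum_congr rfl fun x _ =>
    Finset.sum_congr rfl fun y _ => by ring

lemma dotProduct_vecMulVec_mulVec (u v f : n → ℝ) :
    f ⬝ᵥ vecMulVec u v *ᵥ f = (f ⬝ᵥ u) * (v ⬝ᵥ f) := by
  rw [vecMulVec_mulVec, op_smul_eq_smul, dotProduct_smul, smul_eq_mul, mul_comm]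

lemma dotProduct_kronecker_vecMulVec_one_mulVec (P : Matrix m m ℝ) (f : m × n → ℝ) :
    f ⬝ᵥ (P ⊗ₖ vecMulVec 1 1) *ᵥ f =
      (fun i => ∑ x, f (i, x)) ⬝ᵥ P *ᵥ fun i => ∑ x, f (i, x) := by
  have hJ (v w : n → ℝ) : v ⬝ᵥ vecMulVec 1 1 *ᵥ w = (∑ x, v x) * ∑ x, w x := by
    rw [vecMulVec_mulVec, op_smul_eq_smul, dotProduct_smul, dotProduct_one, one_dotProduct,
      smul_eq_mul, mul_comm]
  rw [dotProduct_kronecker_mulVec]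
  simp only [hJ]
  simp only [Function.curry, dotProduct, mulVec, Finset.mul_sum]
  exact Finset.sum_congr rfl fun i _ => Finset.sum_congr rfl fun j _ =>
    Finset.sum_congr rfl fun y _ => by ring

lemma dotProduct_one_kronecker_mulVec [DecidableEq m] (Q : Matrix n n ℝ) (f : m × n → ℝ) :
    f ⬝ᵥ ((1 : Matrix m m ℝ) ⊗ₖ Q) *ᵥ f = ∑ i, Function.curry f i ⬝ᵥ Q *ᵥ Function.curry f i := by
  rw [dotProduct_kronecker_mulVec]
  simp [one_apply]

lemma dotProduct_mulVec_add_smul_one {M : Matrix n n ℝ} {k : ℝ} (hM : Mᵀ = M)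
    (hrow : M *ᵥ 1 = k • 1) {g : n → ℝ} (hg : ∑ i, g i = 0) (c : ℝ) :
    (g + c • 1) ⬝ᵥ M *ᵥ (g + c • 1) = g ⬝ᵥ M *ᵥ g + c ^ 2 * k * Fintype.card n := by
  have hcol : 1 ⬝ᵥ M *ᵥ g = 0 := by
    rw [dotProduct_mulVec, ← mulVec_transpose, hM, hrow, smul_dotProduct, one_dotProduct, hg,
      smul_zero]
  simp only [mulVec_add, mulVec_smul, hrow, dotProduct_add, add_dotProduct, dotProduct_smul,
    smul_dotProduct, hcol]
  simp only [dotProduct_one, hg, smul_eq_mul, Pi.one_apply, Finset.sum_const, Finset.card_univ,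
    nsmul_eq_mul]
  ring

lemma Matrix.IsHermitian.posSemidef_of_eigenvalue_nonneg [DecidableEq n] {M : Matrix n n ℝ}
    (hM : M.IsHermitian) (h : ∀ θ : ℝ, (∃ x : n → ℝ, x ≠ 0 ∧ M *ᵥ x = θ • x) → 0 ≤ θ) :
    M.PosSemidef :=
  hM.posSemidef_iff_eigenvalues_nonneg.2 fun i => h _
    ⟨_, (WithLp.ofLp_eq_zero 2).ne.2 (hM.eigenvectorBasis.orthonormal.ne_zero i),
      hM.mulVec_eigenvectorBasis i⟩

lemma sq_add_sum_le_of_posSemidef {M : Matrix n n ℝ} {k q L : ℝ} (hM : M.PosSemidef)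
    (hrow : M *ᵥ 1 = k • 1) (hk : 0 ≤ k) (hL : 0 < L)
    (hψ : L * (L + k) = q * (L * (Fintype.card n + 1) + k)) (α : ℝ) (F : n → ℝ) :
    q * (α + ∑ i, F i) ^ 2 ≤ L * (α ^ 2 + F ⬝ᵥ F) + F ⬝ᵥ M *ᵥ F := by
  set N : ℝ := (Fintype.card n : ℝ)
  set c := (∑ i, F i) / N
  set g := F - c • 1
  have hNc : N * c = ∑ i, F i := by
    rcases eq_or_ne N 0 with hN | hN
    · have : IsEmpty n := Fintype.card_eq_zero_iff.1 (Nat.cast_eq_zero.1 hN)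
      simp [hN]
    · exact mul_div_cancel₀ _ hN
  have hg : ∑ i, g i = 0 := by
    simp [g, Finset.sum_sub_distrib, ← hNc, N]
  have hF : F = g + c • 1 := (sub_add_cancel F _).symm
  have hquad := dotProduct_mulVec_add_smul_one (isHermitian_iff_isSymm.1 hM.isHermitian) hrow hg c
  have hnorm : (g + c • 1) ⬝ᵥ (g + c • 1) = g ⬝ᵥ g + c ^ 2 * N := by
    classical
    simpa using dotProduct_mulVec_add_smul_one (M := 1) (k := 1) transpose_one (by simp) hg c
  have hgM : 0 ≤ g ⬝ᵥ M *ᵥ g := by simpa using hM.dotProduct_mulVec_nonneg g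
  have hgg : 0 ≤ g ⬝ᵥ g := Finset.sum_nonneg fun i _ => mul_self_nonneg (g i)
  have hsc := sq_add_le_of_mul_add (Nat.cast_nonneg _) hk hL hψ α c
  rw [← hNc, hF, hquad, hnorm]
  nlinarith [mul_nonneg hL.le hgg]

end QuadraticForms

section QEC

variable {V : Type*} [Fintype V] (G : SimpleGraph V)

lemma isCompact_qec_set : IsCompact {r : ℝ | ∃ f : V → ℝ, (∑ x, f x * f x) = 1 ∧
    (∑ x, f x) = 0 ∧ r = f ⬝ᵥ (distMatrix G).mulVec f} := by
  set K : Set (V → ℝ) := {f | f ⬝ᵥ f = 1} ∩ {f | ∑ x, f x = 0}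
  have hK : IsCompact K := by
    refine Metric.isCompact_of_isClosed_isBounded ?_ ((Metric.isBounded_closedBall (x := 0)
      (r := 1)).subset fun f hf => ?_)
    · exact (isClosed_eq (by fun_prop) continuous_const).inter
        (isClosed_eq (by fun_prop) continuous_const)
    · refine mem_closedBall_zero_iff.2 ((pi_norm_le_iff_of_nonneg zero_le_one).2 fun x => ?_)
      rw [Real.norm_eq_abs, abs_le_one_iff_mul_self_le_one, ← hf.1]
      exact Finset.single_le_sum (fun y _ => mul_self_nonneg (f y)) (Finset.mem_univ x)
  convert hK.image (f := fun f => f ⬝ᵥ distMatrix G *ᵥ f) (by fun_prop) using 1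
  ext r
  exact ⟨fun ⟨f, h1, h2, hr⟩ => ⟨f, ⟨h1, h2⟩, hr.symm⟩,
    fun ⟨f, ⟨h1, h2⟩, hr⟩ => ⟨f, h1, h2, hr.symm⟩⟩

lemma dotProduct_mulVec_le_qec_mul (f : V → ℝ) (hf : ∑ x, f x = 0) :
    f ⬝ᵥ distMatrix G *ᵥ f ≤ QEC G * (f ⬝ᵥ f) := by
  rcases eq_or_ne f 0 with rfl | hf0
  · simp
  have hpos : 0 < f ⬝ᵥ f := by simpa using dotProduct_self_star_pos_iff.2 hf0
  set t := (√(f ⬝ᵥ f))⁻¹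
  have ht : t * t * (f ⬝ᵥ f) = 1 := by
    rw [← mul_inv, Real.mul_self_sqrt hpos.le, inv_mul_cancel₀ hpos.ne']
  have hmem : t * t * (f ⬝ᵥ distMatrix G *ᵥ f) ≤ QEC G := by
    refine le_csSup (isCompact_qec_set G).bddAbove ⟨t • f, ?_, ?_, ?_⟩
    · rw [← ht]
      simp only [dotProduct, Pi.smul_apply, smul_eq_mul, Finset.mul_sum]
      exact Finset.sum_congr rfl fun _ _ => by ring
    · simp [← Finset.mul_sum, hf]
    · simp [mulVec_smul, mul_assoc]
  calc f ⬝ᵥ distMatrix G *ᵥ f = t * t * (f ⬝ᵥ distMatrix G *ᵥ f) * (f ⬝ᵥ f) := by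
        rw [mul_right_comm, ht, one_mul]
    _ ≤ QEC G * (f ⬝ᵥ f) := mul_le_mul_of_nonneg_right hmem hpos.le

lemma qec_le {c : ℝ} (hc : 0 ≤ c)
    (h : ∀ f : V → ℝ, f ⬝ᵥ f = 1 → ∑ x, f x = 0 → f ⬝ᵥ distMatrix G *ᵥ f ≤ c) : QEC G ≤ c :=
  Real.sSup_le (fun _ ⟨f, h1, h2, hr⟩ => hr ▸ h f h1 h2) hc

lemma exists_eq_qec (h : QEC G ≠ 0) :
    ∃ f : V → ℝ, f ⬝ᵥ f = 1 ∧ ∑ x, f x = 0 ∧ QEC G = f ⬝ᵥ distMatrix G *ᵥ f := by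
  have hne : {r : ℝ | ∃ f : V → ℝ, (∑ x, f x * f x) = 1 ∧ (∑ x, f x) = 0 ∧
      r = f ⬝ᵥ (distMatrix G).mulVec f}.Nonempty :=
    Set.nonempty_iff_ne_empty.2 fun he => h (by rw [QEC, he, Real.sSup_empty])
  exact (isCompact_qec_set G).sSup_mem hne

end QEC

namespace Corona

variable {V₂ : Type*} [DecidableEq V₂] (H : SimpleGraph V₂) [DecidableRel H.Adj]

/-- `depth x` is the distance from the cone vertex `none` to `x` in `joinOne H`, and
`joinDist H x y` the distance from `x` to `y` there. -/
def depth : Option V₂ → ℕ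
  | none => 0
  | some _ => 1

def joinDist : Option V₂ → Option V₂ → ℕ
  | none, none => 0
  | none, some _ => 1
  | some _, none => 1
  | some a, some b => if a = b then 0 else if H.Adj a b then 1 else 2

omit [DecidableEq V₂] in
lemma depth_le_one (x : Option V₂) : depth x ≤ 1 := by
  cases x <;> simp [depth]

lemma joinDist_none_left (y : Option V₂) : joinDist H none y = depth y := by
  cases y <;> rfl

lemma joinDist_self (x : Option V₂) : joinDist H x x = 0 := by
  cases x <;> simp [joinDist]

lemma joinDist_le_two (x y : Option V₂) : joinDist H x y ≤ 2 := by
  rcases x with _ | a <;> rcases y with _ | b <;> simp only [joinDist] <;> (try split_ifs) <;> omega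

lemma one_le_joinDist {x y : Option V₂} (h : x ≠ y) : 1 ≤ joinDist H x y := by
  rcases x with _ | a <;> rcases y with _ | b <;> simp_all [joinDist]
  split_ifs <;> omega

lemma joinDist_le_one_of_adj {x y : Option V₂} (h : (joinOne H).Adj x y) :
    joinDist H x y ≤ 1 := by
  rcases x with _ | a <;> rcases y with _ | b <;> simp_all [joinOne, joinDist]
  split_ifs <;> omega

lemma joinDist_eq_of_not_adj {x y : Option V₂} (hne : x ≠ y) (h : ¬(joinOne H).Adj x y) :
    joinDist H x y = depth x + depth y := by
  rcases x with _ | a <;> rcases y with _ | b <;> simp_all [joinOne, joinDist, depth]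

lemma joinDist_le_succ_of_adj {x z : Option V₂} (h : (joinOne H).Adj x z) (y : Option V₂) :
    joinDist H x y ≤ joinDist H z y + 1 := by
  by_cases hzy : z = y
  · subst hzy
    simpa [joinDist_self] using joinDist_le_one_of_adj H h
  · linarith [joinDist_le_two H x y, one_le_joinDist H hzy]

end Corona

open Corona

section CoronaWalks

variable {V₁ V₂ : Type*} {G : SimpleGraph V₁} (H : SimpleGraph V₂)

lemma corona_adj_root {u v : V₁} (h : G.Adj u v) : (corona G H).Adj (u, none) (v, none) :=
  Or.inl ⟨rfl, rfl, h⟩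

lemma corona_adj_of_joinOne_adj (u : V₁) {x y : Option V₂} (h : (joinOne H).Adj x y) :
    (corona G H).Adj (u, x) (u, y) :=
  Or.inr ⟨rfl, h⟩

def SimpleGraph.Walk.coronaLift {u v : V₁} : G.Walk u v → (corona G H).Walk (u, none) (v, none)
  | .nil => .nil
  | .cons h W => .cons (corona_adj_root H h) (W.coronaLift)

@[simp]
lemma SimpleGraph.Walk.length_coronaLift {u v : V₁} (W : G.Walk u v) :
    (W.coronaLift H).length = W.length := by
  induction W with
  | nil => rfl
  | cons h W ih => simp [SimpleGraph.Walk.coronaLift, ih]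

variable (G) in
def coronaRootWalk (u : V₁) : (x : Option V₂) → (corona G H).Walk (u, x) (u, none)
  | none => .nil
  | some _ =>
    (corona_adj_of_joinOne_adj H u (Or.inr (Or.inr ⟨Option.some_ne_none _, rfl⟩))).toWalk

@[simp]
lemma length_coronaRootWalk (u : V₁) (x : Option V₂) :
    (coronaRootWalk G H u x).length = depth x := by
  cases x <;> rfl

end CoronaWalks

section CoronaDist

variable {V₁ V₂ : Type*} [DecidableEq V₁] [DecidableEq V₂] (G : SimpleGraph V₁)
  (H : SimpleGraph V₂) [DecidableRel H.Adj]

noncomputable def coronaDist (p q : V₁ × Option V₂) : ℕ :=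
  if p.1 = q.1 then joinDist H p.2 q.2 else G.dist p.1 q.1 + depth p.2 + depth q.2

variable {G H}

lemma coronaDist_le_succ_of_adj (hG : G.Connected) {p r : V₁ × Option V₂}
    (h : (corona G H).Adj p r) (q : V₁ × Option V₂) :
    coronaDist G H p q ≤ coronaDist G H r q + 1 := by
  obtain ⟨u, x⟩ := p
  obtain ⟨v, z⟩ := r
  obtain ⟨w, y⟩ := q
  rcases h with ⟨rfl, rfl, huv⟩ | ⟨rfl, hxz⟩
  · have h1 : G.dist u v = 1 := SimpleGraph.dist_eq_one_iff_adj.2 huv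
    have htri := hG.dist_triangle (u := u) (v := v) (w := w)
    have hvw : v ≠ w → 1 ≤ G.dist v w := hG.pos_dist_of_ne
    unfold coronaDist
    dsimp only
    split_ifs with huw hvw' hvw'
    · exact absurd (huw.trans hvw'.symm) huv.ne
    · simp only [joinDist_none_left, depth]; omega
    · subst hvw'; simp only [joinDist_none_left, depth]; omega
    · simp only [depth]; omega
  · unfold coronaDist
    split_ifs
    · exact joinDist_le_succ_of_adj H hxz y
    · linarith [depth_le_one x, depth_le_one z]

lemma exists_walk_length_le_coronaDist (hG : G.Connected) (p q : V₁ × Option V₂) :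
    ∃ W : (corona G H).Walk p q, W.length ≤ coronaDist G H p q := by
  obtain ⟨u, x⟩ := p
  obtain ⟨v, y⟩ := q
  unfold coronaDist
  dsimp only
  split_ifs with huv
  · subst huv
    by_cases hxy : x = y
    · subst hxy
      exact ⟨.nil, Nat.zero_le _⟩
    by_cases hadj : (joinOne H).Adj x y
    · exact ⟨(corona_adj_of_joinOne_adj H u hadj).toWalk, one_le_joinDist H hxy⟩
    · refine ⟨(coronaRootWalk G H u x).append (coronaRootWalk G H u y).reverse, ?_⟩
      simp [joinDist_eq_of_not_adj H hxy hadj]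
  · obtain ⟨P, hP⟩ := hG.exists_walk_length_eq_dist u v
    refine ⟨(coronaRootWalk G H u x).append
      ((P.coronaLift H).append (coronaRootWalk G H v y).reverse), ?_⟩
    simp [hP]
    omega

theorem corona_dist (hG : G.Connected) (p q : V₁ × Option V₂) :
    (corona G H).dist p q = coronaDist G H p q := by
  obtain ⟨W, hW⟩ := exists_walk_length_le_coronaDist (H := H) hG p q
  refine le_antisymm ((SimpleGraph.dist_le W).trans hW) ?_
  exact W.reachable.le_dist_of_le_succ_of_adj (coronaDist G H)
    (fun p => by simp [coronaDist, joinDist_self]) (fun h => coronaDist_le_succ_of_adj hG h _)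

end CoronaDist

section CoronaQuadraticForm

variable {V₁ V₂ : Type*} [DecidableEq V₁] [DecidableEq V₂] {G : SimpleGraph V₁}
  (H : SimpleGraph V₂) [DecidableRel H.Adj]

def coronaFiberMatrix : Matrix (Option V₂) (Option V₂) ℝ
  | some a, some b => -(H.adjMatrix ℝ + (2 : ℝ) • 1) a b
  | _, _ => 0

lemma dotProduct_coronaFiberMatrix_mulVec [Fintype V₂] (g : Option V₂ → ℝ) :
    g ⬝ᵥ coronaFiberMatrix H *ᵥ g =
      -((g ∘ some) ⬝ᵥ (H.adjMatrix ℝ + (2 : ℝ) • 1) *ᵥ (g ∘ some)) := by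
  simp only [dotProduct, mulVec, Fintype.sum_option, coronaFiberMatrix, Function.comp_apply,
    zero_mul, mul_zero, Finset.sum_const_zero, zero_add, neg_mul, mul_neg,
    Finset.sum_neg_distrib]

lemma distMatrix_corona (hG : G.Connected) :
    distMatrix (corona G H) = distMatrix G ⊗ₖ vecMulVec 1 1 +
      vecMulVec (fun p => (depth p.2 : ℝ)) 1 + vecMulVec 1 (fun p => (depth p.2 : ℝ)) +
      1 ⊗ₖ coronaFiberMatrix H := by
  ext ⟨u, x⟩ ⟨v, y⟩
  simp only [Matrix.add_apply, kroneckerMap_apply, vecMulVec_apply, Pi.one_apply, one_apply,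
    distMatrix, corona_dist hG, coronaDist]
  split_ifs with huv
  · subst huv
    rcases x with _ | a <;> rcases y with _ | b <;>
      simp [joinDist, depth, coronaFiberMatrix, one_apply, SimpleGraph.adjMatrix_apply]
    split_ifs with hab hadj <;> norm_num
    exact H.ne_of_adj hadj hab
  · push_cast
    ring

theorem dotProduct_distMatrix_corona_mulVec [Fintype V₁] [Fintype V₂] (hG : G.Connected)
    (f : V₁ × Option V₂ → ℝ) (hf : ∑ p, f p = 0) :
    f ⬝ᵥ distMatrix (corona G H) *ᵥ f =
      (fun u => ∑ x, f (u, x)) ⬝ᵥ distMatrix G *ᵥ (fun u => ∑ x, f (u, x)) -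
        ∑ u, (fun a => f (u, some a)) ⬝ᵥ (H.adjMatrix ℝ + (2 : ℝ) • 1) *ᵥ
          fun a => f (u, some a) := by
  rw [distMatrix_corona H hG]
  simp only [add_mulVec, dotProduct_add, dotProduct_kronecker_vecMulVec_one_mulVec,
    dotProduct_one_kronecker_mulVec, dotProduct_vecMulVec_mulVec,
    dotProduct_coronaFiberMatrix_mulVec, dotProduct_one, one_dotProduct, hf, mul_zero, zero_mul,
    add_zero, Finset.sum_neg_distrib, ← sub_eq_add_neg]
  rfl

end CoronaQuadraticForm

section Adjacency

variable {V : Type*} [Fintype V] [DecidableEq V] {H : SimpleGraph V} [DecidableRel H.Adj]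

lemma adjMatrix_add_two_mulVec_one {κ : ℕ} (hreg : H.IsRegularOfDegree κ) :
    (H.adjMatrix ℝ + (2 : ℝ) • 1) *ᵥ 1 = ((κ : ℝ) + 2) • 1 := by
  ext v
  have h := SimpleGraph.adjMatrix_mulVec_const_apply_of_regular (α := ℝ) (a := 1) hreg (v := v)
  simp only [Function.const_one, mul_one] at h
  simp [add_mulVec, smul_mulVec, h]

lemma posSemidef_adjMatrix_add_two {μ : ℝ}
    (hmin : ∀ θ : ℝ, (∃ x : V → ℝ, x ≠ 0 ∧ H.adjMatrix ℝ *ᵥ x = θ • x) → μ ≤ θ)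
    (hμ : -2 ≤ μ) : (H.adjMatrix ℝ + (2 : ℝ) • 1).PosSemidef := by
  refine (isHermitian_iff_isSymm.2 (H.isSymm_adjMatrix.add ((isSymm_one).smul 2)))
    |>.posSemidef_of_eigenvalue_nonneg fun θ ⟨x, hx, h⟩ => ?_
  have hA : H.adjMatrix ℝ *ᵥ x = (θ - 2) • x := by
    rw [add_mulVec, smul_mulVec, one_mulVec] at h
    rw [sub_smul, ← h, add_sub_cancel_right]
  linarith [hmin _ ⟨x, hx, hA⟩]

end Adjacency

section CoronaQEC

variable {V₁ V₂ : Type*} [Fintype V₁] [Fintype V₂] [DecidableEq V₁] [DecidableEq V₂]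
  {G : SimpleGraph V₁} {H : SimpleGraph V₂} [DecidableRel H.Adj] {κ : ℕ} {L : ℝ}

lemma qec_corona_le (hG : G.Connected) (hreg : H.IsRegularOfDegree κ)
    (hM : (H.adjMatrix ℝ + (2 : ℝ) • 1).PosSemidef) (hL : 0 < L)
    (hψ : L * (L + (κ + 2)) = QEC G * (L * (Fintype.card V₂ + 1) + (κ + 2))) :
    QEC (corona G H) ≤ L := by
  refine qec_le _ hL.le fun f hf1 hf0 => ?_
  have hβ : ∑ u, ∑ x, f (u, x) = 0 := by rwa [← Fintype.sum_prod_type']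
  have hcopy (u : V₁) := sq_add_sum_le_of_posSemidef hM (adjMatrix_add_two_mulVec_one hreg)
    (by positivity) hL hψ (f (u, none)) (fun a => f (u, some a))
  rw [dotProduct_distMatrix_corona_mulVec H hG f hf0]
  calc _ ≤ QEC G * ((fun u => ∑ x, f (u, x)) ⬝ᵥ fun u => ∑ x, f (u, x)) -
        ∑ u, (fun a => f (u, some a)) ⬝ᵥ (H.adjMatrix ℝ + (2 : ℝ) • 1) *ᵥ fun a => f (u, some a) :=
        sub_le_sub_right (dotProduct_mulVec_le_qec_mul G _ hβ) _
    _ ≤ ∑ u, L * (f (u, none) ^ 2 + (fun a => f (u, some a)) ⬝ᵥ fun a => f (u, some a)) := by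
        have hβ2 : ((fun u => ∑ x, f (u, x)) ⬝ᵥ fun u => ∑ x, f (u, x)) =
            ∑ u, (f (u, none) + ∑ a, f (u, some a)) ^ 2 := by
          simp [dotProduct, Fintype.sum_option, sq]
        rw [hβ2, Finset.mul_sum, ← Finset.sum_sub_distrib]
        exact Finset.sum_le_sum fun u _ => by linarith [hcopy u]
    _ = L := by
        have hnorm :
            ∑ u, (f (u, none) ^ 2 + (fun a => f (u, some a)) ⬝ᵥ fun a => f (u, some a)) = 1 := by
          rw [← hf1]
          simp [dotProduct, Fintype.sum_prod_type, Fintype.sum_option, sq]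
        rw [← Finset.mul_sum, hnorm, mul_one]

/-- The test vector is the equality case of `sq_add_le_of_mul_add` (`α = λ + κ + 2`, `c = λ`),
tensored with a maximiser of `QEC G`. -/
lemma le_qec_corona (hG : G.Connected) (hreg : H.IsRegularOfDegree κ) (hq : QEC G ≠ 0)
    (hL : 0 < L) (hψ : L * (L + (κ + 2)) = QEC G * (L * (Fintype.card V₂ + 1) + (κ + 2))) :
    L ≤ QEC (corona G H) := by
  obtain ⟨g, hg1, hg0, hgq⟩ := exists_eq_qec G hq
  set w : Option V₂ → ℝ := fun x => x.elim (L + (κ + 2)) fun _ => L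
  set f : V₁ × Option V₂ → ℝ := fun p => w p.2 * g p.1
  have hβ : (fun u => ∑ x, f (u, x)) = (L * (Fintype.card V₂ + 1) + (κ + 2)) • g := by
    ext u
    simp [f, w, Fintype.sum_option]
    ring
  have hF (u : V₁) : (fun a => f (u, some a)) = (L * g u) • 1 := by
    ext a
    simp [f, w]
  have hf0 : ∑ p, f p = 0 := by
    simp only [Fintype.sum_prod_type, congrFun hβ, Pi.smul_apply, smul_eq_mul, ← Finset.mul_sum,
      hg0, mul_zero]
  have hff : f ⬝ᵥ f = (L + (κ + 2)) ^ 2 + Fintype.card V₂ * L ^ 2 := by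
    rw [← mul_one (_ + _), ← hg1]
    simp only [dotProduct, Finset.mul_sum, f, w, Fintype.sum_prod_type, Fintype.sum_option,
      Option.elim, Finset.sum_const, Finset.card_univ, nsmul_eq_mul]
    exact Finset.sum_congr rfl fun _ _ => by ring
  have hpos : 0 < f ⬝ᵥ f := by rw [hff]; positivity
  have hval : f ⬝ᵥ distMatrix (corona G H) *ᵥ f = L * (f ⬝ᵥ f) := by
    rw [dotProduct_distMatrix_corona_mulVec H hG f hf0, hβ]
    simp only [hF, mulVec_smul, adjMatrix_add_two_mulVec_one hreg, dotProduct_smul,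
      smul_dotProduct, one_dotProduct_one, smul_eq_mul, ← hgq]
    have hsum : ∑ u, L * g u * ((κ + 2) * (L * g u * Fintype.card V₂)) =
        L ^ 2 * (κ + 2) * Fintype.card V₂ * (g ⬝ᵥ g) := by
      simp only [dotProduct, Finset.mul_sum]
      exact Finset.sum_congr rfl fun _ _ => by ring
    rw [hsum, hff, hg1]
    linear_combination (-(L * (Fintype.card V₂ + 1) + (κ + 2))) * hψ
  have := dotProduct_mulVec_le_qec_mul (corona G H) f hf0
  rw [hval] at this
  exact le_of_mul_le_mul_right this hpos

end CoronaQEC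

theorem qec_corona_of_pos_general {V₁ V₂ : Type*} [Fintype V₁] [Fintype V₂]
    (G : SimpleGraph V₁) (hG : G.Connected)
    (H : SimpleGraph V₂) [DecidableRel H.Adj] (κ : ℕ) (hreg : H.IsRegularOfDegree κ)
    (μmin : ℝ)
    (hmin2 : ∀ θ : ℝ, (∃ x : V₂ → ℝ, x ≠ 0 ∧ (H.adjMatrix ℝ).mulVec x = θ • x) → μmin ≤ θ)
    (hq : 0 < QEC G) (hγ : -2 - μmin ≤ 0) :
    QEC (corona G H) =
      (1 / 2) * (((Fintype.card V₂ : ℝ) + 1) * QEC G - ((κ : ℝ) + 2) +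
        Real.sqrt ((((Fintype.card V₂ : ℝ) + 1) * QEC G - ((κ : ℝ) + 2)) ^ 2
          + 4 * ((κ : ℝ) + 2) * QEC G)) := by
  classical
  show QEC (corona G H) = psiInv (Fintype.card V₂) (κ + 2) (QEC G)
  have hk : (0 : ℝ) < κ + 2 := by positivity
  have hL := psiInv_pos (n := Fintype.card V₂) hk hq
  have hψ := psiInv_mul_add (n := Fintype.card V₂) hk.le hq.le
  exact le_antisymm
    (qec_corona_le hG hreg (posSemidef_adjMatrix_add_two hmin2 (by linarith)) hL hψ)
    (le_qec_corona hG hreg hq.ne' hL hψ)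

/-- If `QEC(G) > 0`, `γ₃ = −2 − min ev(A_H) ≤ 0`, and
`−2 − ψ_H⁻¹(QEC(G)) ∉ ev(A_H)`, then
`QEC(G⊙H) = ½[(n+1)QEC(G) − (κ+2) + √(((n+1)QEC(G) − (κ+2))² + 4(κ+2)QEC(G))]`. -/
theorem qec_corona_of_pos {V₁ V₂ : Type*} [Fintype V₁] [Fintype V₂] [DecidableEq V₂]
    (G : SimpleGraph V₁) (hG : G.Connected) (hm : 2 ≤ Fintype.card V₁)
    (H : SimpleGraph V₂) [DecidableRel H.Adj] (κ : ℕ) (hreg : H.IsRegularOfDegree κ)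
    (μmin : ℝ)
    (hmin1 : ∃ x : V₂ → ℝ, x ≠ 0 ∧ (H.adjMatrix ℝ).mulVec x = μmin • x)
    (hmin2 : ∀ θ : ℝ, (∃ x : V₂ → ℝ, x ≠ 0 ∧ (H.adjMatrix ℝ).mulVec x = θ • x) → μmin ≤ θ)
    (hq : 0 < QEC G) (hγ : -2 - μmin ≤ 0)
    (hspec : ¬ ∃ x : V₂ → ℝ, x ≠ 0 ∧ (H.adjMatrix ℝ).mulVec x =
      (-2 - ((1 / 2) * (((Fintype.card V₂ : ℝ) + 1) * QEC G - ((κ : ℝ) + 2) +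
        Real.sqrt ((((Fintype.card V₂ : ℝ) + 1) * QEC G - ((κ : ℝ) + 2)) ^ 2
          + 4 * ((κ : ℝ) + 2) * QEC G)))) • x) :
    QEC (corona G H) =
      (1 / 2) * (((Fintype.card V₂ : ℝ) + 1) * QEC G - ((κ : ℝ) + 2) +
        Real.sqrt ((((Fintype.card V₂ : ℝ) + 1) * QEC G - ((κ : ℝ) + 2)) ^ 2
          + 4 * ((κ : ℝ) + 2) * QEC G)) :=
  qec_corona_of_pos_general G hG H κ hreg μmin hmin2 hq hγ
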